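/- Let 𝒜 be a commutative unital complex semisimple Banach algebra, and let A_{ii} ∈ 𝒜^{d_i×d_i} for i = 1,…,n satisfy: for all φ ∈ M_𝒜 and all 1 ≤ i < j ≤ n, σ(Â_{ii}(φ)) ∩ σ(Â_{jj}(φ)) = ∅. Then for any choice of off-diagonal blocks A_{ij} ∈ 𝒜^{d_i×d_j} (i < j), the block upper triangular matrix with diagonal blocks A_{11},…,A_{nn} and upper blocks A_{ij} is similar over 𝒜 to the block diagonal matrix diag(A_{11},…,A_{nn}). -/

import Mathlib

/-! Look for the conjugating matrix in the form `1 + X` with `X` strictly block upper triangular: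
such a matrix is automatically invertible, and `(1 + X) D = T (1 + X)` becomes the linear equation
`X D - T X = T - D` on strictly block upper triangular matrices. Extended by the identity on the
remaining entries, this is an `𝒜`-linear endomorphism of the matrix space, which is invertible as
soon as its determinant lies in no maximal ideal, i.e. is killed by no character `φ`. Applying `φ`
entrywise gives the same operator over `ℂ`, which is injective: if `X D = T X`, then going up the
block rows from the bottom, each block satisfies `A_ii X_ij = X_ij A_jj`, and a Sylvester equation
with disjoint spectra has only the zero solution (`χ_{A_jj}(A_ii)` is invertible by spectral
mapping and kills `X_ij` by Cayley–Hamilton). -/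

open WeakDual Matrix Polynomial

namespace Matrix

variable {m n : Type*}

section Sylvester

variable [Fintype m] [DecidableEq m] [Fintype n] [DecidableEq n]

theorem aeval_mul_eq_mul_aeval {R : Type*} [CommSemiring R] {P : Matrix m m R}
    {Q : Matrix n n R} {X : Matrix m n R} (h : P * X = X * Q) (p : R[X]) :
    aeval P p * X = X * aeval Q p := by
  have hpow : ∀ k : ℕ, P ^ k * X = X * Q ^ k := by
    intro k
    induction k with
    | zero => simp
    | succ k ih => rw [pow_succ, pow_succ, Matrix.mul_assoc, h, ← Matrix.mul_assoc, ih,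
        Matrix.mul_assoc]
  induction p using Polynomial.induction_on' with
  | add p q hp hq => rw [map_add, map_add, Matrix.add_mul, Matrix.mul_add, hp, hq]
  | monomial k c =>
    simp only [aeval_monomial, Algebra.algebraMap_eq_smul_one, smul_mul_assoc, Matrix.one_mul,
      Matrix.smul_mul, Matrix.mul_smul, hpow]

theorem eq_zero_of_mul_eq_mul_of_disjoint_spectrum {𝕜 : Type*} [Field 𝕜] [IsAlgClosed 𝕜]
    {P : Matrix m m 𝕜} {Q : Matrix n n 𝕜} (hPQ : Disjoint (spectrum 𝕜 P) (spectrum 𝕜 Q))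
    {X : Matrix m n 𝕜} (h : P * X = X * Q) : X = 0 := by
  cases isEmpty_or_nonempty n
  · exact Subsingleton.elim _ _
  have hdeg : 0 < degree Q.charpoly := by
    rw [← natDegree_pos_iff_degree_pos, charpoly_natDegree_eq_dim]
    exact Fintype.card_pos
  have hunit : IsUnit (aeval P Q.charpoly) := by
    rw [← spectrum.zero_notMem_iff 𝕜, spectrum.map_polynomial_aeval_of_degree_pos P _ hdeg]
    rintro ⟨μ, hμP, hμ⟩
    exact hPQ.notMem_of_mem_left hμP (mem_spectrum_iff_isRoot_charpoly.mpr hμ)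
  have hzero : aeval P Q.charpoly * X = 0 := by
    rw [aeval_mul_eq_mul_aeval h, aeval_self_charpoly, Matrix.mul_zero]
  rw [isUnit_iff_isUnit_det] at hunit
  rw [← Matrix.one_mul X, ← nonsing_inv_mul _ hunit, Matrix.mul_assoc, hzero, Matrix.mul_zero]

end Sylvester

variable {α : Type*} [LinearOrder α]

def BlockStrictTriangular {R : Type*} [Zero R] (M : Matrix m m R) (b : m → α) : Prop :=
  ∀ ⦃i j⦄, b j ≤ b i → M i j = 0

section BlockStrictTriangular

variable {R : Type*} [Ring R] {b : m → α} {M X : Matrix m m R}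

theorem BlockStrictTriangular.blockTriangular (hX : X.BlockStrictTriangular b) :
    X.BlockTriangular b :=
  fun _ _ h => hX h.le

theorem BlockTriangular.mul_blockStrictTriangular [Fintype m] (hM : M.BlockTriangular b)
    (hX : X.BlockStrictTriangular b) : (M * X).BlockStrictTriangular b := by
  intro i j hji
  rw [mul_apply]
  refine Finset.sum_eq_zero fun k _ => ?_
  rcases lt_or_ge (b k) (b i) with hki | hik
  · rw [hM hki, zero_mul]
  · rw [hX (hji.trans hik), mul_zero]

theorem BlockStrictTriangular.mul_blockTriangular [Fintype m] (hX : X.BlockStrictTriangular b)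
    (hM : M.BlockTriangular b) : (X * M).BlockStrictTriangular b := by
  intro i j hji
  rw [mul_apply]
  refine Finset.sum_eq_zero fun k _ => ?_
  rcases lt_or_ge (b j) (b k) with hjk | hkj
  · rw [hM hjk, mul_zero]
  · rw [hX (hkj.trans hji), zero_mul]

theorem BlockStrictTriangular.sub (hM : M.BlockStrictTriangular b)
    (hX : X.BlockStrictTriangular b) : (M - X).BlockStrictTriangular b := by
  intro i j hji
  rw [Matrix.sub_apply, hM hji, hX hji, sub_zero]

end BlockStrictTriangular

theorem BlockStrictTriangular.isUnit_one_add [Fintype m] [DecidableEq m] {R : Type*} [CommRing R]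
    {b : m → α} {X : Matrix m m R} (hX : X.BlockStrictTriangular b) :
    IsUnit (1 + X) := by
  have hdiag : ∀ a, (1 + X).toSquareBlock b a = 1 := by
    intro a
    ext ⟨i, hi⟩ ⟨j, hj⟩
    simp [toSquareBlock_def, one_apply, hX (hj.trans hi.symm).le]
  rw [isUnit_iff_isUnit_det, (blockTriangular_one.add hX.blockTriangular).det]
  simp [hdiag]

section BlockSylvesterMap

variable [Fintype m] {R S : Type*} [CommRing R] [CommRing S]

def blockSylvesterMap (b : m → α) (D T : Matrix m m R) :
    Matrix m m R →ₗ[R] Matrix m m R where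
  toFun X := of fun i j => if b i < b j then (X * D - T * X) i j else X i j
  map_add' X Y := by
    ext i j
    simp only [Matrix.add_mul, Matrix.mul_add, of_apply, add_apply, sub_apply]
    split_ifs <;> ring
  map_smul' c X := by
    ext i j
    simp only [Matrix.smul_mul, Matrix.mul_smul, of_apply, smul_apply, sub_apply, smul_eq_mul,
      RingHom.id_apply]
    split_ifs <;> ring

theorem blockSylvesterMap_apply (b : m → α) (D T X : Matrix m m R) (i j : m) :
    blockSylvesterMap b D T X i j = if b i < b j then (X * D - T * X) i j else X i j :=
  rfl

theorem blockSylvesterMap_map (ψ : R →+* S) (b : m → α) (D T X : Matrix m m R) :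
    blockSylvesterMap b (D.map ψ) (T.map ψ) (X.map ψ) = (blockSylvesterMap b D T X).map ψ := by
  ext i j
  simp only [blockSylvesterMap_apply, map_apply, ← Matrix.map_mul,
    ← Matrix.map_sub ψ (map_sub ψ)]
  split_ifs <;> rfl

theorem BlockStrictTriangular.of_blockSylvesterMap_eq {b : m → α} {D T X C : Matrix m m R}
    (hC : C.BlockStrictTriangular b) (hX : blockSylvesterMap b D T X = C) :
    X.BlockStrictTriangular b := by
  intro i j hji
  have := congr_fun₂ hX i j
  rwa [blockSylvesterMap_apply, if_neg hji.not_gt, hC hji] at this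

theorem mul_sub_mul_eq_of_blockSylvesterMap_eq {b : m → α} {D T X C : Matrix m m R}
    (hD : D.BlockTriangular b) (hT : T.BlockTriangular b) (hC : C.BlockStrictTriangular b)
    (hX : blockSylvesterMap b D T X = C) : X * D - T * X = C := by
  have hXs := BlockStrictTriangular.of_blockSylvesterMap_eq hC hX
  ext i j
  rcases lt_or_ge (b i) (b j) with hij | hji
  · simpa only [blockSylvesterMap_apply, if_pos hij] using congr_fun₂ hX i j
  · rw [((hXs.mul_blockTriangular hD).sub (hT.mul_blockStrictTriangular hXs)) hji, hC hji]

end BlockSylvesterMap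

section Blocks

variable {ι 𝕜 : Type*} [Fintype ι] [LinearOrder ι] [DecidableEq ι] {d : ι → Type*}
  [∀ i, Fintype (d i)] [∀ i, DecidableEq (d i)] [Field 𝕜] [IsAlgClosed 𝕜]
  {A : ∀ i, Matrix (d i) (d i) 𝕜} {T : Matrix (Σ i, d i) (Σ i, d i) 𝕜}

theorem eq_zero_of_mul_blockDiagonal'_eq_mul
    (hA : ∀ i j, i < j → Disjoint (spectrum 𝕜 (A i)) (spectrum 𝕜 (A j)))
    (hT : T.BlockTriangular Sigma.fst) (hdiag : ∀ i x y, T ⟨i, x⟩ ⟨i, y⟩ = A i x y)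
    {X : Matrix (Σ i, d i) (Σ i, d i) 𝕜} (hX : X.BlockStrictTriangular Sigma.fst)
    (h : X * blockDiagonal' A = T * X) : X = 0 := by
  suffices hrow : ∀ i j (x : d i) (y : d j), X ⟨i, x⟩ ⟨j, y⟩ = 0 by
    ext ⟨i, x⟩ ⟨j, y⟩
    exact hrow i j x y
  intro i
  induction i using WellFoundedGT.induction with
  | ind i ih =>
    intro j x y
    obtain hji | hij := le_or_gt j i
    · exact hX hji
    set Y : Matrix (d i) (d j) 𝕜 := of fun x y => X ⟨i, x⟩ ⟨j, y⟩
    suffices hY : A i * Y = Y * A j from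
      congr_fun₂ (eq_zero_of_mul_eq_mul_of_disjoint_spectrum (hA i j hij) hY) x y
    ext x y
    have hxy := congr_fun₂ h ⟨i, x⟩ ⟨j, y⟩
    simp only [mul_apply, Fintype.sum_sigma] at hxy ⊢
    rw [Finset.sum_eq_single j, Finset.sum_eq_single i] at hxy
    · simpa [Y, hdiag] using hxy.symm
    · intro k _ hki
      refine Finset.sum_eq_zero fun z _ => ?_
      rcases lt_or_gt_of_ne hki with hk | hk
      · rw [hT hk, zero_mul]
      · rw [ih k hk j z y, mul_zero]
    · simp
    · intro k _ hkj
      exact Finset.sum_eq_zero fun z _ => by rw [blockDiagonal'_apply_ne A _ _ hkj, mul_zero]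
    · simp

theorem blockSylvesterMap_injective
    (hA : ∀ i j, i < j → Disjoint (spectrum 𝕜 (A i)) (spectrum 𝕜 (A j)))
    (hT : T.BlockTriangular Sigma.fst) (hdiag : ∀ i x y, T ⟨i, x⟩ ⟨i, y⟩ = A i x y) :
    Function.Injective (blockSylvesterMap Sigma.fst (blockDiagonal' A) T) := by
  rw [← LinearMap.ker_eq_bot, LinearMap.ker_eq_bot']
  intro X hX
  have hC : (0 : Matrix (Σ i, d i) (Σ i, d i) 𝕜).BlockStrictTriangular Sigma.fst :=
    fun _ _ _ => rfl
  refine eq_zero_of_mul_blockDiagonal'_eq_mul hA hT hdiag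
    (BlockStrictTriangular.of_blockSylvesterMap_eq hC hX) (sub_eq_zero.mp ?_)
  exact mul_sub_mul_eq_of_blockSylvesterMap_eq (blockTriangular_blockDiagonal' A) hT hC hX

end Blocks

end Matrix

theorem RingHom.map_linearMap_det {m n R S : Type*} [Fintype m] [DecidableEq m] [Fintype n]
    [DecidableEq n] [CommRing R] [CommRing S] (ψ : R →+* S)
    {f : Matrix m n R →ₗ[R] Matrix m n R} {g : Matrix m n S →ₗ[S] Matrix m n S}
    (h : ∀ M, g (M.map ψ) = (f M).map ψ) : ψ (LinearMap.det f) = LinearMap.det g := by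
  rw [← LinearMap.det_toMatrix (stdBasis R m n), ← LinearMap.det_toMatrix (stdBasis S m n),
    RingHom.map_det]
  congr 1
  ext ⟨i, j⟩ ⟨k, l⟩
  rw [RingHom.mapMatrix_apply, map_apply, LinearMap.toMatrix_apply, LinearMap.toMatrix_apply,
    stdBasis_eq_single, stdBasis_eq_single]
  change ψ (f (single k l 1) i j) = g (single k l 1) i j
  simpa using (congr_fun₂ (h (single k l 1)) i j).symm

theorem isUnit_det_blockSylvesterMap {𝒜 ι : Type*} [NormedCommRing 𝒜]
    [NormedAlgebra ℂ 𝒜] [CompleteSpace 𝒜] [Fintype ι] [LinearOrder ι] [DecidableEq ι]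
    {d : ι → Type*} [∀ i, Fintype (d i)] [∀ i, DecidableEq (d i)]
    {A : ∀ i, Matrix (d i) (d i) 𝒜} {T : Matrix (Σ i, d i) (Σ i, d i) 𝒜}
    (hA : ∀ φ : characterSpace ℂ 𝒜, ∀ i j, i < j →
      Disjoint (spectrum ℂ ((A i).map φ)) (spectrum ℂ ((A j).map φ)))
    (hT : T.BlockTriangular Sigma.fst) (hdiag : ∀ i x y, T ⟨i, x⟩ ⟨i, y⟩ = A i x y) :
    IsUnit (LinearMap.det (blockSylvesterMap Sigma.fst (blockDiagonal' A) T)) := by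
  by_contra hL
  obtain ⟨φ, hφ⟩ := CharacterSpace.exists_apply_eq_zero hL
  let ψ : 𝒜 →+* ℂ := φ
  have hinj := blockSylvesterMap_injective (A := fun i => (A i).map ψ) (T := T.map ψ)
    (hA φ) (hT.map ψ) (fun i x y => by simp [hdiag])
  have hdet := ψ.map_linearMap_det
    (g := blockSylvesterMap Sigma.fst (blockDiagonal' fun i => (A i).map ψ) (T.map ψ))
    fun X => by rw [← blockDiagonal'_map A ψ (map_zero ψ), blockSylvesterMap_map]
  have hunit := (LinearMap.isUnit_iff_ker_eq_bot _).mpr (LinearMap.ker_eq_bot.mpr hinj)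
  rw [LinearMap.isUnit_iff_isUnit_det, ← hdet] at hunit
  exact hunit.ne_zero hφ

theorem block_triangular_similar_block_diagonal_general (N : ℕ) (d : Fin N → ℕ)
    {𝒜 : Type*} [NormedCommRing 𝒜] [NormedAlgebra ℂ 𝒜] [CompleteSpace 𝒜]
    (A : ∀ i : Fin N, Matrix (Fin (d i)) (Fin (d i)) 𝒜)
    (hspec : ∀ φ : characterSpace ℂ 𝒜, ∀ i j : Fin N, i < j →
      spectrum ℂ ((A i).map φ) ∩ spectrum ℂ ((A j).map φ) = ∅)
    (T : Matrix (Σ i : Fin N, Fin (d i)) (Σ i : Fin N, Fin (d i)) 𝒜)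
    (hdiag : ∀ (i : Fin N) (x y : Fin (d i)), T ⟨i, x⟩ ⟨i, y⟩ = A i x y)
    (hlower : ∀ (i j : Fin N), j < i → ∀ (x : Fin (d i)) (y : Fin (d j)),
      T ⟨i, x⟩ ⟨j, y⟩ = 0) :
    IsConj (Matrix.blockDiagonal' A) T := by
  have hT : T.BlockTriangular Sigma.fst := fun a b h => hlower a.1 b.1 h a.2 b.2
  have hL := isUnit_det_blockSylvesterMap
    (fun φ i j hij => Set.disjoint_iff_inter_eq_empty.mpr (hspec φ i j hij)) hT hdiag
  have hLbij := (Module.End.isUnit_iff _).mp ((LinearMap.isUnit_iff_isUnit_det _).mpr hL)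
  obtain ⟨X, hX⟩ := hLbij.surjective (T - blockDiagonal' A)
  have hC : (T - blockDiagonal' A).BlockStrictTriangular Sigma.fst := by
    rintro ⟨i, x⟩ ⟨j, y⟩ (hji : j ≤ i)
    rcases hji.lt_or_eq with hji | rfl
    · rw [Matrix.sub_apply, hlower i j hji, blockDiagonal'_apply_ne A _ _ hji.ne', sub_zero]
    · rw [Matrix.sub_apply, hdiag, blockDiagonal'_apply_eq, sub_self]
  have hXeq := mul_sub_mul_eq_of_blockSylvesterMap_eq (blockTriangular_blockDiagonal' A) hT hC hX
  refine ⟨(BlockStrictTriangular.of_blockSylvesterMap_eq hC hX).isUnit_one_add.unit, ?_⟩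
  rw [SemiconjBy, IsUnit.unit_spec, Matrix.add_mul, Matrix.mul_add, Matrix.one_mul,
    Matrix.mul_one]
  rw [sub_eq_sub_iff_add_eq_add] at hXeq
  rw [add_comm, hXeq]

theorem block_triangular_similar_block_diagonal (N : ℕ) (d : Fin N → ℕ)
    {𝒜 : Type*} [NormedCommRing 𝒜] [NormedAlgebra ℂ 𝒜] [CompleteSpace 𝒜] [Nontrivial 𝒜]
    (hss : ∀ a : 𝒜, (∀ φ : characterSpace ℂ 𝒜, φ a = 0) → a = 0)
    (A : ∀ i : Fin N, Matrix (Fin (d i)) (Fin (d i)) 𝒜)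
    (hspec : ∀ φ : characterSpace ℂ 𝒜, ∀ i j : Fin N, i < j →
      spectrum ℂ ((A i).map φ) ∩ spectrum ℂ ((A j).map φ) = ∅)
    (T : Matrix (Σ i : Fin N, Fin (d i)) (Σ i : Fin N, Fin (d i)) 𝒜)
    (hdiag : ∀ (i : Fin N) (x y : Fin (d i)), T ⟨i, x⟩ ⟨i, y⟩ = A i x y)
    (hlower : ∀ (i j : Fin N), j < i → ∀ (x : Fin (d i)) (y : Fin (d j)),
      T ⟨i, x⟩ ⟨j, y⟩ = 0) :
    IsConj (Matrix.blockDiagonal' A) T :=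
  block_triangular_similar_block_diagonal_general N d A hspec T hdiag hlower
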